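/- arXiv:2104.00796 — 4 statements merged into one kernel-verified Lean document; each statement's English description precedes it below -/
import Mathlib

section
/- Let A ∈ ℝ^{n×m} be a matrix with L₂-normalized columns and coherence η = max_{i≠j} |⟨v_i, v_j⟩|, where v_i are the columns of A. Then for every integer s ≥ 2, the restricted isometry constant satisfies δ_s(A) ≤ η·(s−1), i.e., for every s-sparse vector x, (1 − η(s−1))‖x‖₂² ≤ ‖Ax‖₂² ≤ (1 + η(s−1))‖x‖₂². -/
open Matrix BigOperators

/-- Euclidean (L2) norm of a vector in `ℝ^n`. -/
noncomputable def l2norm {n : ℕ} (x : Fin n → ℝ) : ℝ := Real.sqrt (∑ i, x i ^ 2)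

/-- A vector is `s`-sparse if it has at most `s` nonzero entries. -/
def Sparse {m : ℕ} (s : ℕ) (x : Fin m → ℝ) : Prop := {i | x i ≠ 0}.ncard ≤ s

/-- The coherence of a matrix: the maximum absolute inner product between two
distinct columns. -/
noncomputable def coherence {n m : ℕ} (A : Matrix (Fin n) (Fin m) ℝ) : ℝ :=
  sSup {r : ℝ | ∃ i j : Fin m, i ≠ j ∧ r = |∑ k, A k i * A k j|}

/-- If `A` has `L₂`-normalized columns and coherence `η`, then for every `s ≥ 2`
and every `s`-sparse `x`, `(1 − η(s−1))‖x‖₂² ≤ ‖Ax‖₂² ≤ (1 + η(s−1))‖x‖₂²`;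
i.e. the restricted isometry constant satisfies `δ_s(A) ≤ η (s−1)`. -/
theorem stmt2 {n m : ℕ} (A : Matrix (Fin n) (Fin m) ℝ)
    (hcols : ∀ j, l2norm (fun i => A i j) = 1)
    (s : ℕ) (hs : 2 ≤ s) (x : Fin m → ℝ) (hx : Sparse s x) :
    (1 - coherence A * ((s : ℝ) - 1)) * l2norm x ^ 2 ≤ l2norm (A.mulVec x) ^ 2 ∧
    l2norm (A.mulVec x) ^ 2 ≤ (1 + coherence A * ((s : ℝ) - 1)) * l2norm x ^ 2 := by
  classical
  set η := coherence A with hηdef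
  set g : Fin m → Fin m → ℝ := fun i j => ∑ k, A k i * A k j with hg
  -- columns normalized: diagonal of Gram matrix is 1
  have hdiag : ∀ i, g i i = 1 := by
    intro i
    have h := hcols i
    unfold l2norm at h
    have := (Real.sqrt_eq_one).1 h
    simpa [hg, sq] using this
  -- all column sums of squares equal 1
  have hcolsq : ∀ i, ∑ k, A k i ^ 2 = 1 := by
    intro i
    have := hdiag i
    simpa [hg, sq] using this
  -- bounded above
  have hbdd : BddAbove {r : ℝ | ∃ i j : Fin m, i ≠ j ∧ r = |∑ k, A k i * A k j|} := by
    refine ⟨1, fun r hr => ?_⟩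
    obtain ⟨i, j, hij, rfl⟩ := hr
    have cs := Real.sum_mul_le_sqrt_mul_sqrt Finset.univ (fun k => |A k i|) (fun k => |A k j|)
    simp only [sq_abs] at cs
    rw [hcolsq i, hcolsq j] at cs
    simp only [Real.sqrt_one, one_mul] at cs
    calc |∑ k, A k i * A k j| ≤ ∑ k, |A k i * A k j| := Finset.abs_sum_le_sum_abs _ _
      _ = ∑ k, |A k i| * |A k j| := by simp [abs_mul]
      _ ≤ 1 := cs
  have hη : ∀ i j : Fin m, i ≠ j → |g i j| ≤ η := by
    intro i j hij
    exact le_csSup hbdd ⟨i, j, hij, rfl⟩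
  have hη0 : 0 ≤ η := Real.sSup_nonneg (by rintro r ⟨i, j, hij, rfl⟩; exact abs_nonneg _)
  -- support
  set T : Finset (Fin m) := Finset.univ.filter (fun i => x i ≠ 0) with hT
  have hTmem : ∀ i, i ∈ T ↔ x i ≠ 0 := by intro i; simp [hT]
  have hTcard : (T.card : ℝ) ≤ s := by
    have : {i | x i ≠ 0}.ncard = T.card := by
      rw [Set.ncard_eq_toFinset_card']
      congr 1
      ext i; simp [hT]
    have hc : T.card ≤ s := by rw [← this]; exact hx
    exact_mod_cast hc
  -- l2 norm squared of x
  have hxsq : l2norm x ^ 2 = ∑ i, x i ^ 2 := by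
    unfold l2norm; rw [Real.sq_sqrt (by positivity)]
  have hxT : ∑ i, x i ^ 2 = ∑ i ∈ T, x i ^ 2 := by
    refine (Finset.sum_subset (Finset.subset_univ T) ?_).symm
    intro i _ hi
    have : x i = 0 := by by_contra h; exact hi ((hTmem i).2 h)
    simp [this]
  have hsum0 : 0 ≤ ∑ i ∈ T, x i ^ 2 := Finset.sum_nonneg fun i _ => sq_nonneg _
  -- expansion of ‖Ax‖²
  have hexp : l2norm (A.mulVec x) ^ 2 = ∑ i, ∑ j, x i * x j * g i j := by
    unfold l2norm
    rw [Real.sq_sqrt (by positivity)]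
    have step1 : ∀ k, (A.mulVec x k) ^ 2 = ∑ i, ∑ j, (x i * x j) * (A k i * A k j) := by
      intro k
      have hm : A.mulVec x k = ∑ i, A k i * x i := by
        simp [Matrix.mulVec, dotProduct]
      rw [hm, sq, Finset.sum_mul_sum]
      exact Finset.sum_congr rfl fun i _ => Finset.sum_congr rfl fun j _ => by ring
    rw [Finset.sum_congr rfl fun k _ => step1 k, Finset.sum_comm]
    refine Finset.sum_congr rfl fun i _ => ?_
    rw [Finset.sum_comm]
    refine Finset.sum_congr rfl fun j _ => ?_
    rw [hg, Finset.mul_sum]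
  -- restrict to T
  have hexpT : l2norm (A.mulVec x) ^ 2 = ∑ i ∈ T, ∑ j ∈ T, x i * x j * g i j := by
    rw [hexp]
    rw [← Finset.sum_subset (Finset.subset_univ T) (fun i _ hi => ?_)]
    · congr 1; ext i
      refine (Finset.sum_subset (Finset.subset_univ T) ?_).symm
      intro j _ hj
      have : x j = 0 := by by_contra h; exact hj ((hTmem j).2 h)
      simp [this]
    · have : x i = 0 := by by_contra h; exact hi ((hTmem i).2 h)
      simp [this]
  set D : ℝ := ∑ i ∈ T, ∑ j ∈ T.erase i, x i * x j * g i j with hD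
  have hsplit : l2norm (A.mulVec x) ^ 2 = (∑ i ∈ T, x i ^ 2) + D := by
    rw [hexpT, hD, ← Finset.sum_add_distrib]
    refine Finset.sum_congr rfl fun i hi => ?_
    rw [← Finset.add_sum_erase T _ hi, hdiag i]; ring_nf
  -- bound on D
  have hDbound : |D| ≤ η * ((s : ℝ) - 1) * ∑ i ∈ T, x i ^ 2 := by
    have h1 : |D| ≤ ∑ i ∈ T, ∑ j ∈ T.erase i, |x i| * |x j| * η := by
      calc |D| ≤ ∑ i ∈ T, |∑ j ∈ T.erase i, x i * x j * g i j| :=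
            Finset.abs_sum_le_sum_abs _ _
        _ ≤ ∑ i ∈ T, ∑ j ∈ T.erase i, |x i * x j * g i j| :=
            Finset.sum_le_sum fun i _ => Finset.abs_sum_le_sum_abs _ _
        _ ≤ ∑ i ∈ T, ∑ j ∈ T.erase i, |x i| * |x j| * η := by
            refine Finset.sum_le_sum fun i _ => Finset.sum_le_sum fun j hj => ?_
            rw [abs_mul, abs_mul]
            have hij : i ≠ j := fun h => (Finset.ne_of_mem_erase hj) h.symm
            exact mul_le_mul_of_nonneg_left (hη i j hij)
              (mul_nonneg (abs_nonneg _) (abs_nonneg _))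
    have h2 : ∑ i ∈ T, ∑ j ∈ T.erase i, |x i| * |x j|
        = (∑ i ∈ T, |x i|) ^ 2 - ∑ i ∈ T, x i ^ 2 := by
      have : ∀ i ∈ T, ∑ j ∈ T.erase i, |x i| * |x j|
          = (∑ j ∈ T, |x i| * |x j|) - |x i| * |x i| := by
        intro i hi
        rw [← Finset.add_sum_erase T _ hi]; ring
      rw [Finset.sum_congr rfl this, Finset.sum_sub_distrib, ← Finset.sum_mul_sum]
      congr 1
      · rw [sq]
      · refine Finset.sum_congr rfl fun i _ => ?_
        rw [← abs_mul, ← sq, abs_sq]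
    have h3 : (∑ i ∈ T, |x i|) ^ 2 ≤ (T.card : ℝ) * ∑ i ∈ T, x i ^ 2 := by
      have := sq_sum_le_card_mul_sum_sq (s := T) (f := fun i => |x i|)
      simpa [sq_abs] using this
    have h4 : ∑ i ∈ T, ∑ j ∈ T.erase i, |x i| * |x j| ≤ ((s : ℝ) - 1) * ∑ i ∈ T, x i ^ 2 := by
      rw [h2]
      nlinarith [hsum0, hTcard, h3]
    calc |D| ≤ ∑ i ∈ T, ∑ j ∈ T.erase i, |x i| * |x j| * η := h1
      _ = η * ∑ i ∈ T, ∑ j ∈ T.erase i, |x i| * |x j| := by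
          rw [Finset.mul_sum]; congr 1; ext i; rw [Finset.mul_sum]; congr 1; ext j; ring
      _ ≤ η * (((s : ℝ) - 1) * ∑ i ∈ T, x i ^ 2) := mul_le_mul_of_nonneg_left h4 hη0
      _ = η * ((s : ℝ) - 1) * ∑ i ∈ T, x i ^ 2 := by ring
  have habs := abs_le.1 hDbound
  constructor
  · rw [hsplit, hxsq, hxT]; nlinarith [habs.1]
  · rw [hsplit, hxsq, hxT]; nlinarith [habs.2]
end

section
/- Let A ∈ ℝ^{n×p} and B ∈ ℝ^{n×q} be column full rank matrices with n > p+q, and suppose C = [A, B] is also column full rank. Let z ∈ ℝ^n with Aᵀz = 0, and b ∈ Im A. Then the least-squares solution ŵ = (ŵ₁, ŵ₂) of min_w ‖Cw − (b+z)‖₂ is given by ŵ₁ = A⁺b − A⁺B M⁻¹ Bᵀz and ŵ₂ = M⁻¹ Bᵀz, where M = BᵀB − BᵀA(AᵀA)⁻¹AᵀB and A⁺ = (AᵀA)⁻¹Aᵀ. -/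
/-!
Write `P = A A⁺` for the orthogonal projector onto `Im A`, so that `M = Bᵀ (1 - P) B`. For the
candidate `w₂ = M⁻¹ Bᵀ z`, `w₁ = A⁺ (b - B w₂)`, the residual is `(1 - P) B w₂ - z` (as `P b = b`).
It is orthogonal to `Im A` because `Aᵀ (1 - P) = 0` and `Aᵀ z = 0`, and to `Im B` because
`Bᵀ (1 - P) B w₂ = M w₂ = Bᵀ z`. A vector satisfying the normal equations is a least-squares
solution, by Pythagoras, and the least-squares solution is unique since `CᵀC` is invertible;
this invertibility also gives that of its Schur complement `M`.
-/

open Matrix BigOperators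

/-- Pseudoinverse `A⁺ = (AᵀA)⁻¹ Aᵀ` of a full column rank matrix. -/
noncomputable def pinv {n p : ℕ} (A : Matrix (Fin n) (Fin p) ℝ) :
    Matrix (Fin p) (Fin n) ℝ := (Aᵀ * A)⁻¹ * Aᵀ

lemma Matrix.isUnit_of_rank_eq_card {K m : Type*} [Field K] [Fintype m] [DecidableEq m]
    {N : Matrix m m K} (h : N.rank = Fintype.card m) : IsUnit N := by
  rw [← mulVec_injective_iff_isUnit]
  have hsurj : Function.Surjective N.mulVecLin := by
    rw [← LinearMap.range_eq_top]
    apply Submodule.eq_top_of_finrank_eq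
    rw [← rank, h, Module.finrank_fintype_fun_eq_card]
  exact LinearMap.injective_iff_surjective.mpr hsurj

lemma Matrix.isUnit_transpose_mul_self_of_rank_eq_card {m k : Type*} [Fintype m] [Fintype k]
    [DecidableEq k] {A : Matrix m k ℝ} (h : A.rank = Fintype.card k) : IsUnit (Aᵀ * A) :=
  isUnit_of_rank_eq_card (by rw [rank_transpose_mul_self, h])

lemma l2norm_le_l2norm_iff {n : ℕ} {x y : Fin n → ℝ} : l2norm x ≤ l2norm y ↔ x ⬝ᵥ x ≤ y ⬝ᵥ y := by
  simp only [l2norm, dotProduct, ← sq]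
  exact Real.sqrt_le_sqrt_iff (Finset.sum_nonneg fun i _ => sq_nonneg _)

section LeastSquares

variable {m k : Type*} [Fintype m] [Fintype k] (C : Matrix m k ℝ) (y : m → ℝ)

lemma Matrix.residual_dotProduct_self_eq_of_normal {w₀ : k → ℝ}
    (hw₀ : Cᵀ *ᵥ (C *ᵥ w₀ - y) = 0) (w : k → ℝ) :
    (C *ᵥ w - y) ⬝ᵥ (C *ᵥ w - y) =
      (C *ᵥ (w - w₀)) ⬝ᵥ (C *ᵥ (w - w₀)) + (C *ᵥ w₀ - y) ⬝ᵥ (C *ᵥ w₀ - y) := by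
  have hcross : (C *ᵥ (w - w₀)) ⬝ᵥ (C *ᵥ w₀ - y) = 0 := by
    rw [dotProduct_comm, dotProduct_mulVec, ← mulVec_transpose, hw₀, zero_dotProduct]
  have hsplit : C *ᵥ w - y = C *ᵥ (w - w₀) + (C *ᵥ w₀ - y) := by
    rw [mulVec_sub]; abel
  rw [hsplit, add_dotProduct, dotProduct_add, dotProduct_add, dotProduct_comm (C *ᵥ w₀ - y), hcross]
  ring

lemma Matrix.eq_of_residual_le_of_normal [DecidableEq k] (hC : IsUnit (Cᵀ * C)) {w₀ w : k → ℝ}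
    (hw₀ : Cᵀ *ᵥ (C *ᵥ w₀ - y) = 0)
    (hw : (C *ᵥ w - y) ⬝ᵥ (C *ᵥ w - y) ≤ (C *ᵥ w₀ - y) ⬝ᵥ (C *ᵥ w₀ - y)) : w = w₀ := by
  rw [residual_dotProduct_self_eq_of_normal C y hw₀] at hw
  have hker : C *ᵥ (w - w₀) = 0 :=
    dotProduct_self_eq_zero.mp (le_antisymm (by linarith) (dotProduct_self_star_nonneg _))
  have hgram : (Cᵀ * C) *ᵥ (w - w₀) = (Cᵀ * C) *ᵥ 0 := by
    rw [← mulVec_mulVec, hker, mulVec_zero, mulVec_zero]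
  exact sub_eq_zero.mp (mulVec_injective_iff_isUnit.mpr hC hgram)

end LeastSquares

lemma Matrix.isUnit_schur_of_isUnit_fromCols {R m k l : Type*} [CommRing R] [Fintype m]
    [Fintype k] [Fintype l] [DecidableEq k] [DecidableEq l] {A : Matrix m k R}
    {B : Matrix m l R} (hA : IsUnit (Aᵀ * A)) (hC : IsUnit ((fromCols A B)ᵀ * fromCols A B)) :
    IsUnit (Bᵀ * B - Bᵀ * A * (Aᵀ * A)⁻¹ * Aᵀ * B) := by
  have := hA.invertible
  rw [transpose_fromCols, fromRows_mul_fromCols, isUnit_fromBlocks_iff_of_invertible₁₁,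
    invOf_eq_nonsing_inv] at hC
  simpa only [Matrix.mul_assoc] using hC

section Pinv

variable {n p q : ℕ} {A : Matrix (Fin n) (Fin p) ℝ} (B : Matrix (Fin n) (Fin q) ℝ)

lemma pinv_mul_self (hA : IsUnit (Aᵀ * A)) : pinv A * A = 1 := by
  rw [pinv, Matrix.mul_assoc, nonsing_inv_mul _ ((isUnit_iff_isUnit_det _).mp hA)]

lemma transpose_mul_one_sub_mul_pinv (hA : IsUnit (Aᵀ * A)) :
    Aᵀ * (1 - A * pinv A) = 0 := by
  rw [Matrix.mul_sub, Matrix.mul_one, pinv, ← Matrix.mul_assoc, ← Matrix.mul_assoc,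
    mul_nonsing_inv _ ((isUnit_iff_isUnit_det _).mp hA), Matrix.one_mul, sub_self]

lemma transpose_mul_one_sub_mul_pinv_mul :
    Bᵀ * (1 - A * pinv A) * B = Bᵀ * B - Bᵀ * A * (Aᵀ * A)⁻¹ * Aᵀ * B := by
  simp only [pinv, Matrix.mul_sub, Matrix.sub_mul, Matrix.mul_one, Matrix.mul_assoc]

lemma fromCols_mulVec_pinv_sub (hA : IsUnit (Aᵀ * A))
    (u : Fin p → ℝ) (z : Fin n → ℝ) (w₂ : Fin q → ℝ) :
    fromCols A B *ᵥ Sum.elim (pinv A *ᵥ (A *ᵥ u - B *ᵥ w₂)) w₂ - (A *ᵥ u + z) =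
      (1 - A * pinv A) *ᵥ (B *ᵥ w₂) - z := by
  rw [fromCols_mulVec_sumElim, mulVec_sub, mulVec_sub, mulVec_mulVec, mulVec_mulVec,
    Matrix.mul_assoc, pinv_mul_self hA, Matrix.mul_one, sub_mulVec, one_mulVec]
  simp only [mulVec_mulVec, Matrix.mul_assoc]
  abel

lemma transpose_fromCols_mulVec_residual_eq_zero (hA : IsUnit (Aᵀ * A)) (u : Fin p → ℝ)
    {z : Fin n → ℝ} (hz : Aᵀ *ᵥ z = 0) {w₂ : Fin q → ℝ}
    (hw₂ : (Bᵀ * B - Bᵀ * A * (Aᵀ * A)⁻¹ * Aᵀ * B) *ᵥ w₂ = Bᵀ *ᵥ z) :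
    (fromCols A B)ᵀ *ᵥ
      (fromCols A B *ᵥ Sum.elim (pinv A *ᵥ (A *ᵥ u - B *ᵥ w₂)) w₂ - (A *ᵥ u + z)) = 0 := by
  have hA_orth : Aᵀ *ᵥ ((1 - A * pinv A) *ᵥ (B *ᵥ w₂) - z) = 0 := by
    rw [mulVec_sub, mulVec_mulVec, transpose_mul_one_sub_mul_pinv hA, zero_mulVec, hz, sub_zero]
  have hB_orth : Bᵀ *ᵥ ((1 - A * pinv A) *ᵥ (B *ᵥ w₂) - z) = 0 := by
    rw [mulVec_sub, mulVec_mulVec, mulVec_mulVec, transpose_mul_one_sub_mul_pinv_mul, hw₂,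
      sub_self]
  rw [fromCols_mulVec_pinv_sub B hA, transpose_fromCols, fromRows_mulVec, hA_orth, hB_orth]
  ext (i | j) <;> rfl

end Pinv

theorem stmt4_general {n p q : ℕ}
    (A : Matrix (Fin n) (Fin p) ℝ) (B : Matrix (Fin n) (Fin q) ℝ)
    (hA : A.rank = p)
    (hC : (fromCols A B).rank = p + q)
    (b z : Fin n → ℝ) (hb : ∃ u, b = A *ᵥ u) (hz : Aᵀ *ᵥ z = 0)
    (M : Matrix (Fin q) (Fin q) ℝ)
    (hM : M = Bᵀ * B - Bᵀ * A * (Aᵀ * A)⁻¹ * Aᵀ * B)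
    (wh : Fin p ⊕ Fin q → ℝ)
    (hwh : ∀ w : Fin p ⊕ Fin q → ℝ,
      l2norm ((fromCols A B) *ᵥ wh - (b + z)) ≤
        l2norm ((fromCols A B) *ᵥ w - (b + z))) :
    (fun i => wh (Sum.inl i)) = pinv A *ᵥ b - (pinv A * B * M⁻¹ * Bᵀ) *ᵥ z ∧
    (fun j => wh (Sum.inr j)) = (M⁻¹ * Bᵀ) *ᵥ z := by
  obtain ⟨u, rfl⟩ := hb
  have hAA : IsUnit (Aᵀ * A) := isUnit_transpose_mul_self_of_rank_eq_card (by simpa using hA)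
  have hCC : IsUnit ((fromCols A B)ᵀ * fromCols A B) :=
    isUnit_transpose_mul_self_of_rank_eq_card (by simpa using hC)
  have hMu : IsUnit M := hM ▸ isUnit_schur_of_isUnit_fromCols hAA hCC
  have hw₂ : M *ᵥ (M⁻¹ * Bᵀ) *ᵥ z = Bᵀ *ᵥ z := by
    rw [mulVec_mulVec, mul_nonsing_inv_cancel_left M _ ((isUnit_iff_isUnit_det _).mp hMu)]
  have hw₁ : pinv A *ᵥ (A *ᵥ u) - (pinv A * B * M⁻¹ * Bᵀ) *ᵥ z =
      pinv A *ᵥ (A *ᵥ u - B *ᵥ (M⁻¹ * Bᵀ) *ᵥ z) := by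
    simp only [mulVec_sub, mulVec_mulVec, Matrix.mul_assoc]
  have hwh_eq := eq_of_residual_le_of_normal _ _ hCC
    (transpose_fromCols_mulVec_residual_eq_zero B hAA u hz (by rwa [← hM]))
    (l2norm_le_l2norm_iff.mp (hwh _))
  rw [hw₁, hwh_eq]
  exact ⟨rfl, rfl⟩

/-- Block formula for the least-squares solution: with `C = [A,B]` full column rank,
`b ∈ Im A`, `Aᵀ z = 0` and `M = BᵀB − BᵀA(AᵀA)⁻¹AᵀB`, the minimizer
`ŵ = (ŵ₁, ŵ₂)` of `‖C w − (b+z)‖₂` satisfies `ŵ₁ = A⁺b − A⁺ B M⁻¹ Bᵀ z` and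
`ŵ₂ = M⁻¹ Bᵀ z`. -/
theorem stmt4 {n p q : ℕ} (hn : p + q < n)
    (A : Matrix (Fin n) (Fin p) ℝ) (B : Matrix (Fin n) (Fin q) ℝ)
    (hA : A.rank = p) (hB : B.rank = q)
    (hC : (fromCols A B).rank = p + q)
    (b z : Fin n → ℝ) (hb : ∃ u, b = A *ᵥ u) (hz : Aᵀ *ᵥ z = 0)
    (M : Matrix (Fin q) (Fin q) ℝ)
    (hM : M = Bᵀ * B - Bᵀ * A * (Aᵀ * A)⁻¹ * Aᵀ * B)
    (wh : Fin p ⊕ Fin q → ℝ)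
    (hwh : ∀ w : Fin p ⊕ Fin q → ℝ,
      l2norm ((fromCols A B) *ᵥ wh - (b + z)) ≤
        l2norm ((fromCols A B) *ᵥ w - (b + z))) :
    (fun i => wh (Sum.inl i)) = pinv A *ᵥ b - (pinv A * B * M⁻¹ * Bᵀ) *ᵥ z ∧
    (fun j => wh (Sum.inr j)) = (M⁻¹ * Bᵀ) *ᵥ z :=
  stmt4_general A B hA hC b z hb hz M hM wh hwh
end

section
/- Let (X, μ, f) be an ergodic measure-preserving system, and let φ₁, …, φ_m ∈ L²(μ) be orthonormal in L²(μ). Then for every η₀ > 0 and ε ∈ (0,1) there exist n₀ > 0 and a set G ⊂ X with μ(G) > 1 − ε such that for all x₀ ∈ G and all n > n₀, the n×m matrix Θ with entries Θ_{k,i} = φ_i(f^{k−1}(x₀))/√n satisfies |⟨u_i, u_j⟩ − δ_{ij}| ≤ η₀ for all i ≠ j (where u_i are the columns of Θ); in particular the coherence of Θ is at most η₀ after column normalization. -/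
/-!
The Gram matrix `ΘᵀΘ` has entries `(1/n) ∑_{k<n} φ_i(f^k x₀) φ_j(f^k x₀)`, the Birkhoff averages of
the bounded observables `φ_i φ_j`. By Birkhoff's pointwise ergodic theorem these converge a.e. to
`∫ φ_i φ_j dμ = δ_ij`, and since there are finitely many pairs `(i, j)`, Egorov's theorem makes the
convergence uniform on a set of measure `> 1 - ε`.

The ergodic theorem for bounded observables follows from Garsia's maximal ergodic theorem: the
set where `limsup_n (1/n) S_n g > c` is `f`-invariant, so it is null or conull by ergodicity, and
conull is impossible for `c > ∫ g` because the maximal ergodic theorem for `g - c` would give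
`∫ (g - c) ≥ 0`.
-/

open MeasureTheory Filter Topology

theorem Filter.Frequently.lt_of_tendsto_sub {ι : Type*} {l : Filter ι} {u v : ι → ℝ} {a b : ℝ}
    (hu : ∃ᶠ n in l, b < u n) (huv : Tendsto (u - v) l (𝓝 0)) (hab : a < b) :
    ∃ᶠ n in l, a < v n := by
  have hclose : ∀ᶠ n in l, u n - v n < b - a := huv (Iio_mem_nhds (sub_pos.2 hab))
  exact (hu.and_eventually hclose).mono fun n ⟨h₁, h₂⟩ => by linarith

section Birkhoff

variable {X : Type*} {f : X → X} {g : X → ℝ}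

theorem birkhoffSum_sub_const (f : X → X) (g : X → ℝ) (c : ℝ) (n : ℕ) (x : X) :
    birkhoffSum f (fun y => g y - c) n x = n * (birkhoffAverage ℝ f g n x - c) := by
  rcases n.eq_zero_or_pos with rfl | hn
  · simp
  · simp only [birkhoffSum, birkhoffAverage, Finset.sum_sub_distrib, Finset.sum_const,
      Finset.card_range, nsmul_eq_mul, smul_eq_mul]
    field_simp

theorem birkhoffAverage_apply_apply {ι : Type*} (f : X → X) (Φ : X → ι → ℝ) (n : ℕ) (x : X)
    (i : ι) : birkhoffAverage ℝ f Φ n x i = birkhoffAverage ℝ f (Φ · i) n x := by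
  simp [birkhoffAverage, birkhoffSum, Finset.sum_apply]

theorem sum_div_sqrt_mul_div_sqrt_eq_birkhoffAverage (f : X → X) (φ ψ : X → ℝ) (n : ℕ) (x : X) :
    ∑ k ∈ Finset.range n, (φ (f^[k] x) / √n) * (ψ (f^[k] x) / √n) =
      birkhoffAverage ℝ f (fun y => φ y * ψ y) n x := by
  simp only [birkhoffAverage, birkhoffSum, smul_eq_mul, Finset.mul_sum]
  refine Finset.sum_congr rfl fun k _ => ?_
  rw [div_mul_div_comm, Real.mul_self_sqrt n.cast_nonneg, inv_mul_eq_div]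

variable (f g) in
noncomputable def maxBirkhoffSum (N : ℕ) : X → ℝ :=
  (Finset.range (N + 1)).sup' Finset.nonempty_range_add_one (birkhoffSum f g)

theorem birkhoffSum_le_maxBirkhoffSum {n N : ℕ} (hn : n ≤ N) (x : X) :
    birkhoffSum f g n x ≤ maxBirkhoffSum f g N x := by
  rw [maxBirkhoffSum, Finset.sup'_apply]
  exact Finset.le_sup' (fun n => birkhoffSum f g n x) (Finset.mem_range_succ_iff.2 hn)

theorem maxBirkhoffSum_nonneg (N : ℕ) (x : X) : 0 ≤ maxBirkhoffSum f g N x :=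
  (birkhoffSum_zero f g x).symm.trans_le (birkhoffSum_le_maxBirkhoffSum N.zero_le x)

theorem exists_maxBirkhoffSum_eq (N : ℕ) (x : X) :
    ∃ n ≤ N, maxBirkhoffSum f g N x = birkhoffSum f g n x := by
  obtain ⟨n, hn, h⟩ := (Finset.range (N + 1)).exists_mem_eq_sup' Finset.nonempty_range_add_one
    (fun n => birkhoffSum f g n x)
  exact ⟨n, Finset.mem_range_succ_iff.1 hn, by rw [maxBirkhoffSum, Finset.sup'_apply, h]⟩

theorem monotone_maxBirkhoffSum (x : X) : Monotone fun N => maxBirkhoffSum f g N x := by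
  intro N N' h
  simp only [maxBirkhoffSum, Finset.sup'_apply]
  exact Finset.sup'_mono _ (Finset.range_subset_range.2 (Nat.succ_le_succ h)) _

/-- Since `S (n + 1) x = g x + S n (f x)`, the running maximum drops along `f` by at most `g`. -/
theorem maxBirkhoffSum_sub_maxBirkhoffSum_comp_le (N : ℕ) (x : X) :
    maxBirkhoffSum f g N x - maxBirkhoffSum f g N (f x) ≤
      {y | 0 < maxBirkhoffSum f g N y}.indicator g x := by
  by_cases hx : x ∈ {y | 0 < maxBirkhoffSum f g N y}
  · rw [Set.indicator_of_mem hx]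
    obtain ⟨n, hnN, hn⟩ := exists_maxBirkhoffSum_eq (f := f) (g := g) N x
    obtain ⟨n, rfl⟩ : ∃ k, n = k + 1 :=
      Nat.exists_eq_succ_of_ne_zero fun h => by simp [h, hn] at hx
    have := birkhoffSum_le_maxBirkhoffSum (g := g) (f := f) (by omega : n ≤ N) (f x)
    rw [hn, birkhoffSum_succ']
    linarith
  · rw [Set.indicator_of_notMem hx]
    have hx' : maxBirkhoffSum f g N x ≤ 0 := not_lt.1 hx
    linarith [maxBirkhoffSum_nonneg (f := f) (g := g) N (f x)]

variable (f g) in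
/-- The set where `limsup_n birkhoffAverage ℝ f g n x > c`, with a rational witness in between
so that the set is visibly measurable. -/
def upperBirkhoffSet (c : ℝ) : Set X :=
  {x | ∃ q : ℚ, c < q ∧ ∃ᶠ n in atTop, (q : ℝ) < birkhoffAverage ℝ f g n x}

theorem preimage_upperBirkhoffSet (hg : Bornology.IsBounded (Set.range g)) (c : ℝ) :
    f ⁻¹' upperBirkhoffSet f g c = upperBirkhoffSet f g c := by
  have hclose := tendsto_birkhoffAverage_apply_sub_birkhoffAverage' ℝ hg f
  ext x
  constructor
  · rintro ⟨q, hcq, hq⟩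
    obtain ⟨q', hcq', hq'q⟩ := exists_rat_btwn hcq
    exact ⟨q', hcq', hq.lt_of_tendsto_sub (hclose x) (by exact_mod_cast hq'q)⟩
  · rintro ⟨q, hcq, hq⟩
    obtain ⟨q', hcq', hq'q⟩ := exists_rat_btwn hcq
    refine ⟨q', hcq', hq.lt_of_tendsto_sub ?_ (by exact_mod_cast hq'q)⟩
    have := (hclose x).neg
    rw [neg_zero] at this
    exact this.congr fun n => neg_sub _ _

end Birkhoff

section Measure

variable {X : Type*} [MeasurableSpace X] {μ : Measure X} {f : X → X} {g : X → ℝ}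

theorem measurable_birkhoffSum {M : Type*} [AddCommMonoid M] [MeasurableSpace M]
    [MeasurableAdd₂ M] {g : X → M} (hf : Measurable f) (hg : Measurable g) (n : ℕ) :
    Measurable (birkhoffSum f g n) :=
  Finset.measurable_sum _ fun k _ => hg.comp (hf.iterate k)

theorem measurable_birkhoffAverage {R M : Type*} [DivisionSemiring R] [AddCommMonoid M]
    [Module R M] [MeasurableSpace M] [MeasurableAdd₂ M] [MeasurableConstSMul R M] {g : X → M}
    (hf : Measurable f) (hg : Measurable g) (n : ℕ) :
    Measurable (birkhoffAverage R f g n) :=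
  (measurable_birkhoffSum hf hg n).const_smul _

theorem MeasureTheory.MeasurePreserving.integrable_birkhoffSum (hf : MeasurePreserving f μ μ)
    (hg : Integrable g μ) (n : ℕ) : Integrable (birkhoffSum f g n) μ :=
  integrable_finsetSum _ fun k _ => (hf.iterate k).integrable_comp_of_integrable hg

theorem measurable_maxBirkhoffSum (hf : Measurable f) (hg : Measurable g) (N : ℕ) :
    Measurable (maxBirkhoffSum f g N) :=
  Finset.sup'_induction _ _ (p := Measurable) (fun _ h₁ _ h₂ => h₁.sup h₂)
    fun n _ => measurable_birkhoffSum hf hg n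

theorem MeasureTheory.MeasurePreserving.integrable_maxBirkhoffSum
    (hf : MeasurePreserving f μ μ) (hg : Integrable g μ) (N : ℕ) :
    Integrable (maxBirkhoffSum f g N) μ :=
  Finset.sup'_induction _ _ (p := (Integrable · μ)) (fun _ h₁ _ h₂ => h₁.sup h₂)
    fun n _ => hf.integrable_birkhoffSum hg n

theorem MeasureTheory.MeasurePreserving.setIntegral_maxBirkhoffSum_pos_nonneg
    (hf : MeasurePreserving f μ μ) (hgm : Measurable g) (hg : Integrable g μ) (N : ℕ) :
    0 ≤ ∫ x in {x | 0 < maxBirkhoffSum f g N x}, g x ∂μ := by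
  have hM := hf.integrable_maxBirkhoffSum hg N
  have hMm := measurable_maxBirkhoffSum hf.measurable hgm N
  have hMf : Integrable (fun x => maxBirkhoffSum f g N (f x)) μ :=
    hf.integrable_comp_of_integrable hM
  have hinv : ∫ x, maxBirkhoffSum f g N (f x) ∂μ = ∫ x, maxBirkhoffSum f g N x ∂μ := by
    rw [← integral_map hf.measurable.aemeasurable (hf.map_eq ▸ hMm.aestronglyMeasurable),
      hf.map_eq]
  have hE : MeasurableSet {x | 0 < maxBirkhoffSum f g N x} :=
    measurableSet_lt measurable_const hMm
  calc (0 : ℝ) = ∫ x, (maxBirkhoffSum f g N x - maxBirkhoffSum f g N (f x)) ∂μ := by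
        rw [integral_sub hM hMf, hinv, sub_self]
    _ ≤ ∫ x, {y | 0 < maxBirkhoffSum f g N y}.indicator g x ∂μ :=
        integral_mono (hM.sub hMf) (hg.indicator hE) (maxBirkhoffSum_sub_maxBirkhoffSum_comp_le N)
    _ = _ := integral_indicator hE

theorem MeasureTheory.MeasurePreserving.setIntegral_birkhoffSum_pos_nonneg
    (hf : MeasurePreserving f μ μ) (hgm : Measurable g) (hg : Integrable g μ) :
    0 ≤ ∫ x in {x | ∃ n, 0 < birkhoffSum f g n x}, g x ∂μ := by
  have hunion : ⋃ N, {x | 0 < maxBirkhoffSum f g N x} = {x | ∃ n, 0 < birkhoffSum f g n x} := by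
    ext x
    simp only [Set.mem_iUnion, Set.mem_ofPred_eq]
    constructor
    · rintro ⟨N, hN⟩
      obtain ⟨n, -, hn⟩ := exists_maxBirkhoffSum_eq (f := f) (g := g) N x
      exact ⟨n, hn ▸ hN⟩
    · rintro ⟨n, hn⟩
      exact ⟨n, hn.trans_le (birkhoffSum_le_maxBirkhoffSum le_rfl x)⟩
  have hlim := tendsto_setIntegral_of_monotone (μ := μ) (f := g)
    (s := fun N => {x | 0 < maxBirkhoffSum f g N x})
    (fun N => measurableSet_lt measurable_const (measurable_maxBirkhoffSum hf.measurable hgm N))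
    (fun N N' h x hx => hx.trans_le (monotone_maxBirkhoffSum x h)) hg.integrableOn
  rw [hunion] at hlim
  exact ge_of_tendsto' hlim (hf.setIntegral_maxBirkhoffSum_pos_nonneg hgm hg)

theorem measurableSet_upperBirkhoffSet (hf : Measurable f) (hg : Measurable g) (c : ℝ) :
    MeasurableSet (upperBirkhoffSet f g c) := by
  have hfreq (q : ℝ) : MeasurableSet {x | ∃ᶠ n in atTop, q < birkhoffAverage ℝ f g n x} := by
    have : {x | ∃ᶠ n in atTop, q < birkhoffAverage ℝ f g n x} =
        limsup (fun n => {x | q < birkhoffAverage ℝ f g n x}) atTop := by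
      ext x
      simp [mem_limsup_iff_frequently_mem]
    rw [this]
    exact .measurableSet_limsup fun n =>
      measurableSet_lt measurable_const (measurable_birkhoffAverage hf hg n)
  simp only [upperBirkhoffSet, Set.ofPred_exists, Set.ofPred_and]
  exact .iUnion fun q => (MeasurableSet.const _).inter (hfreq q)

theorem exists_measure_compl_lt_forall_dist_lt [IsFiniteMeasure μ] {β : Type*} [MetricSpace β]
    {F : ℕ → X → β} {c : β} (hF : ∀ n, StronglyMeasurable (F n))
    (hlim : ∀ᵐ x ∂μ, Tendsto (F · x) atTop (𝓝 c)) {ε η : ℝ} (hε : 0 < ε) (hη : 0 < η) :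
    ∃ G, MeasurableSet G ∧ μ Gᶜ < ENNReal.ofReal ε ∧
      ∃ n₀, ∀ n ≥ n₀, ∀ x ∈ G, dist (F n x) c < η := by
  obtain ⟨t, htm, hμt, hunif⟩ :=
    tendstoUniformlyOn_of_ae_tendsto' hF stronglyMeasurable_const hlim (half_pos hε)
  obtain ⟨n₀, hn₀⟩ := eventually_atTop.1 (Metric.tendstoUniformlyOn_iff.1 hunif η hη)
  refine ⟨tᶜ, htm.compl, ?_, n₀, fun n hn x hx => by rw [dist_comm]; exact hn₀ n hn x hx⟩
  rw [compl_compl]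
  exact hμt.trans_lt ((ENNReal.ofReal_lt_ofReal_iff hε).2 (half_lt_self hε))

variable [IsProbabilityMeasure μ]

theorem Ergodic.measure_upperBirkhoffSet_eq_zero (hf : Ergodic f μ) (hgm : Measurable g)
    (hgb : Bornology.IsBounded (Set.range g)) {c : ℝ} (hc : ∫ x, g x ∂μ < c) :
    μ (upperBirkhoffSet f g c) = 0 := by
  have hgi : Integrable g μ := by
    obtain ⟨C, hC⟩ := isBounded_iff_forall_norm_le.1 hgb
    exact .of_bound hgm.aestronglyMeasurable C (.of_forall fun x => hC _ ⟨x, rfl⟩)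
  refine (hf.measure_self_or_compl_eq_zero (measurableSet_upperBirkhoffSet hf.measurable hgm c)
    (preimage_upperBirkhoffSet hgb c)).resolve_right fun hfull => ?_
  have hpos : ∀ᵐ x ∂μ, x ∈ {x | ∃ n, 0 < birkhoffSum f (fun y => g y - c) n x} := by
    filter_upwards [measure_eq_zero_iff_ae_notMem.1 hfull] with x hx
    obtain ⟨q, hcq, hq⟩ := Set.notMem_compl_iff.1 hx
    obtain ⟨n, hqn, hn⟩ := (hq.and_eventually (eventually_gt_atTop 0)).exists
    refine ⟨n, ?_⟩
    rw [birkhoffSum_sub_const]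
    exact mul_pos (Nat.cast_pos.2 hn) (sub_pos.2 (hcq.trans hqn))
  have hmax := hf.toMeasurePreserving.setIntegral_birkhoffSum_pos_nonneg (g := fun y => g y - c)
    (hgm.sub measurable_const) (hgi.sub (integrable_const c))
  rw [Measure.restrict_eq_self_of_ae_mem hpos, integral_sub hgi (integrable_const c)] at hmax
  simp only [integral_const, probReal_univ, one_smul] at hmax
  linarith

theorem Ergodic.ae_eventually_birkhoffAverage_lt (hf : Ergodic f μ) (hgm : Measurable g)
    (hgb : Bornology.IsBounded (Set.range g)) :
    ∀ᵐ x ∂μ, ∀ b, ∫ x, g x ∂μ < b → ∀ᶠ n in atTop, birkhoffAverage ℝ f g n x < b := by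
  have hnull : ∀ᵐ x ∂μ, ∀ c : ℚ, ∫ x, g x ∂μ < c → x ∉ upperBirkhoffSet f g c := by
    refine ae_all_iff.2 fun c => ?_
    rcases lt_or_ge (∫ x, g x ∂μ) c with hc | hc
    · exact (measure_eq_zero_iff_ae_notMem.1
        (hf.measure_upperBirkhoffSet_eq_zero hgm hgb hc)).mono fun x hx _ => hx
    · exact .of_forall fun x h => absurd h hc.not_gt
  filter_upwards [hnull] with x hx b hb
  obtain ⟨c, hgc, hcb⟩ := exists_rat_btwn hb
  obtain ⟨q, hcq, hqb⟩ := exists_rat_btwn hcb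
  have hq : ∀ᶠ n in atTop, ¬ (q : ℝ) < birkhoffAverage ℝ f g n x :=
    not_frequently.1 fun hfreq => hx c hgc ⟨q, by exact_mod_cast hcq, hfreq⟩
  exact hq.mono fun n hn => (not_lt.1 hn).trans_lt hqb

theorem Ergodic.ae_tendsto_birkhoffAverage (hf : Ergodic f μ) (hgm : Measurable g)
    (hgb : Bornology.IsBounded (Set.range g)) :
    ∀ᵐ x ∂μ, Tendsto (birkhoffAverage ℝ f g · x) atTop (𝓝 (∫ x, g x ∂μ)) := by
  have hneg : Bornology.IsBounded (Set.range (-g)) :=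
    hgb.neg.subset (by rintro _ ⟨x, rfl⟩; exact ⟨x, by simp⟩)
  filter_upwards [hf.ae_eventually_birkhoffAverage_lt hgm hgb,
    hf.ae_eventually_birkhoffAverage_lt hgm.neg hneg] with x hup hlow
  refine tendsto_order.2 ⟨fun a ha => ?_, hup⟩
  simpa [birkhoffAverage_neg] using hlow (-a) (by simpa [integral_neg] using ha)

theorem Ergodic.ae_tendsto_birkhoffAverage_pi (hf : Ergodic f μ) {ι : Type*} [Countable ι]
    {Φ : X → ι → ℝ} (hm : ∀ i, Measurable (Φ · i))
    (hb : ∀ i, Bornology.IsBounded (Set.range (Φ · i))) :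
    ∀ᵐ x ∂μ, Tendsto (birkhoffAverage ℝ f Φ · x) atTop (𝓝 fun i => ∫ x, Φ x i ∂μ) := by
  filter_upwards [ae_all_iff.2 fun i => hf.ae_tendsto_birkhoffAverage (hm i) (hb i)] with x hx
  exact tendsto_pi_nhds.2 fun i => by simpa only [birkhoffAverage_apply_apply] using hx i

end Measure

theorem stmt13_general {X : Type*} [MeasurableSpace X]
    (μ : Measure X) [IsProbabilityMeasure μ]
    (f : X → X) (hf : Ergodic f μ)
    (m : ℕ) (φ : Fin m → X → ℝ)
    (hmeas : ∀ i, Measurable (φ i))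
    (hbdd : ∀ i, ∃ Cb : ℝ, ∀ x, |φ i x| ≤ Cb)
    (horth : ∀ i j, ∫ x, φ i x * φ j x ∂μ = if i = j then (1 : ℝ) else 0)
    (η₀ : ℝ) (hη : 0 < η₀) (ε : ℝ) (hε : ε ∈ Set.Ioo (0 : ℝ) 1) :
    ∃ (n₀ : ℕ) (G : Set X), MeasurableSet G ∧ 1 - ENNReal.ofReal ε < μ G ∧
      ∀ x₀ ∈ G, ∀ n > n₀, ∀ i j : Fin m, i ≠ j →
        |(∑ k ∈ Finset.range n,
            (φ i (f^[k] x₀) / Real.sqrt n) * (φ j (f^[k] x₀) / Real.sqrt n)) -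
          (if i = j then (1 : ℝ) else 0)| ≤ η₀ := by
  set Φ : X → Fin m × Fin m → ℝ := fun x p => φ p.1 x * φ p.2 x
  have hmeasurable (p : Fin m × Fin m) : Measurable (Φ · p) := (hmeas p.1).mul (hmeas p.2)
  have hbounded (p : Fin m × Fin m) : Bornology.IsBounded (Set.range (Φ · p)) := by
    obtain ⟨C₁, hC₁⟩ := hbdd p.1
    obtain ⟨C₂, hC₂⟩ := hbdd p.2
    refine isBounded_iff_forall_norm_le.2 ⟨C₁ * C₂, ?_⟩
    rintro _ ⟨x, rfl⟩
    rw [Real.norm_eq_abs, abs_mul]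
    exact mul_le_mul (hC₁ x) (hC₂ x) (abs_nonneg _) ((abs_nonneg _).trans (hC₁ x))
  obtain ⟨G, hGm, hGc, n₀, hn₀⟩ := exists_measure_compl_lt_forall_dist_lt
    (fun n => (measurable_birkhoffAverage hf.measurable
      (measurable_pi_lambda _ hmeasurable) n).stronglyMeasurable)
    (hf.ae_tendsto_birkhoffAverage_pi hmeasurable hbounded) hε.1 hη
  refine ⟨n₀, G, hGm, ?_, fun x hx n hn i j _ => ?_⟩
  · refine ENNReal.sub_lt_of_sub_lt (ENNReal.ofReal_le_one.2 hε.2.le) (.inl ENNReal.one_ne_top) ?_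
    rwa [← prob_compl_eq_one_sub hGm]
  · have hgram := (dist_le_pi_dist _ _ (i, j)).trans (hn₀ n hn.le x hx).le
    rwa [birkhoffAverage_apply_apply, ← sum_div_sqrt_mul_div_sqrt_eq_birkhoffAverage, horth,
      Real.dist_eq] at hgram

/-- Ergodic coherence: if `φ₁, …, φ_m` are bounded measurable functions that are
orthonormal in `L²(μ)` for an ergodic system `(X, μ, f)`, then for every
`η₀ > 0` and `ε ∈ (0,1)` there are `n₀` and a set `G` with `μ(G) > 1 − ε` such
that for all `x₀ ∈ G` and `n > n₀`, the columns `u_i` of the `n × m` matrix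
`Θ_{k,i} = φ_i(f^{k-1}(x₀))/√n` satisfy `|⟨u_i, u_j⟩ − δ_{ij}| ≤ η₀` for all
`i ≠ j`. -/
theorem stmt13 {X : Type*} [MetricSpace X] [CompactSpace X] [MeasurableSpace X]
    [BorelSpace X] (μ : Measure X) [IsProbabilityMeasure μ]
    (f : X → X) (hf : Ergodic f μ)
    (m : ℕ) (φ : Fin m → X → ℝ)
    (hmeas : ∀ i, Measurable (φ i))
    (hbdd : ∀ i, ∃ Cb : ℝ, ∀ x, |φ i x| ≤ Cb)
    (horth : ∀ i j, ∫ x, φ i x * φ j x ∂μ = if i = j then (1 : ℝ) else 0)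
    (η₀ : ℝ) (hη : 0 < η₀) (ε : ℝ) (hε : ε ∈ Set.Ioo (0 : ℝ) 1) :
    ∃ (n₀ : ℕ) (G : Set X), MeasurableSet G ∧ 1 - ENNReal.ofReal ε < μ G ∧
      ∀ x₀ ∈ G, ∀ n > n₀, ∀ i j : Fin m, i ≠ j →
        |(∑ k ∈ Finset.range n,
            (φ i (f^[k] x₀) / Real.sqrt n) * (φ j (f^[k] x₀) / Real.sqrt n)) -
          (if i = j then (1 : ℝ) else 0)| ≤ η₀ :=
  stmt13_general μ f hf m φ hmeas hbdd horth η₀ hη ε hε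
end

section
/- Suppose A ∈ ℝ^{n×m} satisfies the restricted isometry property with δ_{2s}(A) < √2 − 1, and suppose x ∈ ℝ^m is s-sparse with Ax = b (noiseless case, ε = 0). Then x is the unique minimizer of min{‖x̃‖₁ : Ax̃ = b}. -/
open Matrix BigOperators

/-- The `ℓ₁` norm of a vector. -/
noncomputable def l1norm {n : ℕ} (x : Fin n → ℝ) : ℝ := ∑ i, |x i|

/-- The restricted isometry constant `δ_s(A)`: the smallest `δ ≥ 0` such that
`(1−δ)‖x‖₂² ≤ ‖Ax‖₂² ≤ (1+δ)‖x‖₂²` for all `s`-sparse `x`. -/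
noncomputable def ripConst {n m : ℕ} (s : ℕ) (A : Matrix (Fin n) (Fin m) ℝ) : ℝ :=
  sInf {δ : ℝ | 0 ≤ δ ∧ ∀ x : Fin m → ℝ, Sparse s x →
    (1 - δ) * l2norm x ^ 2 ≤ l2norm (A *ᵥ x) ^ 2 ∧
    l2norm (A *ᵥ x) ^ 2 ≤ (1 + δ) * l2norm x ^ 2}

/-!
Candès' argument. If `A y = A x` and `‖y‖₁ ≤ ‖x‖₁`, then `h = y - x` lies in `ker A` and, with
`supp x ⊆ T₀`, `|T₀| ≤ s`, satisfies the cone condition `‖h_{T₀ᶜ}‖₁ ≤ ‖h_{T₀}‖₁`. Split `T₀ᶜ` into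
blocks `T₁, T₂, …` of `s` indices in decreasing order of `|h|`; then
`∑_{j ≥ 2} ‖h_{Tⱼ}‖₂ ≤ s^{-1/2} ‖h_{T₀ᶜ}‖₁ ≤ s^{-1/2} ‖h_{T₀}‖₁ ≤ ‖h_{T₀}‖₂`.
Polarizing the RIP bounds gives `|⟨Au, Av⟩| ≤ δ ‖u‖₂ ‖v‖₂` for disjointly supported `s`-sparse
`u, v`, and since `A h_{T₀ ∪ T₁} = -∑_{j ≥ 2} A h_{Tⱼ}` this yields
`(1 - δ) ‖h_{T₀ ∪ T₁}‖₂² ≤ √2 δ ‖h_{T₀ ∪ T₁}‖₂²`. For `δ < √2 - 1` this forces `h_{T₀} = 0`, and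
then `h = 0` by the cone condition. In other words, the RIP implies the null space property,
which implies exact recovery.
-/

lemma Sparse.mono {m s t : ℕ} {x y : Fin m → ℝ} (hy : Sparse s y)
    (hsupp : Function.support x ⊆ Function.support y) (hst : s ≤ t) : Sparse t x :=
  (Set.ncard_le_ncard hsupp (Set.toFinite _)).trans (hy.trans hst)

lemma Sparse.add {m s t : ℕ} {x y : Fin m → ℝ} (hx : Sparse s x) (hy : Sparse t y) :
    Sparse (s + t) (x + y) :=
  (Set.ncard_le_ncard (Function.support_add x y) (Set.toFinite _)).trans
    ((Set.ncard_union_le _ _).trans (add_le_add hx hy))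

lemma Sparse.smul {m s : ℕ} {x : Fin m → ℝ} (hx : Sparse s x) (c : ℝ) : Sparse s (c • x) :=
  hx.mono (Function.support_const_smul_subset c x) le_rfl

lemma sparse_indicator {m s : ℕ} (T : Finset (Fin m)) (hT : T.card ≤ s) (g : Fin m → ℝ) :
    Sparse s ((T : Set (Fin m)).indicator g) :=
  (Set.ncard_le_ncard (Set.support_indicator_subset) T.finite_toSet).trans
    ((Set.ncard_coe_finset T).trans_le hT)

lemma Sparse.exists_finset {m s : ℕ} {x : Fin m → ℝ} (hx : Sparse s x) :
    ∃ T : Finset (Fin m), T.card ≤ s ∧ ∀ i ∉ T, x i = 0 :=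
  ⟨(Set.toFinite _).toFinset, (Set.ncard_eq_toFinset_card _).symm.trans_le hx,
    fun i hi => by simpa using hi⟩

lemma l2norm_nonneg {m : ℕ} (x : Fin m → ℝ) : 0 ≤ l2norm x := Real.sqrt_nonneg _

lemma l2norm_sq {m : ℕ} (x : Fin m → ℝ) : l2norm x ^ 2 = x ⬝ᵥ x := by
  rw [l2norm, Real.sq_sqrt (by positivity)]
  simp only [dotProduct, sq]

lemma l2norm_eq_zero {m : ℕ} {x : Fin m → ℝ} : l2norm x = 0 ↔ x = 0 := by
  rw [← sq_eq_zero_iff, l2norm_sq, dotProduct_self_eq_zero]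

lemma l2norm_indicator {m : ℕ} (T : Finset (Fin m)) (g : Fin m → ℝ) :
    l2norm ((T : Set (Fin m)).indicator g) = √(∑ i ∈ T, g i ^ 2) := by
  rw [l2norm, ← Finset.sum_indicator_subset _ (Finset.subset_univ T)]
  congr 1
  refine Finset.sum_congr rfl fun i _ => ?_
  by_cases hi : i ∈ T <;> simp [hi]

lemma dotProduct_eq_zero_of_disjoint {m : ℕ} {u v : Fin m → ℝ}
    (huv : Disjoint (Function.support u) (Function.support v)) : u ⬝ᵥ v = 0 :=
  Finset.sum_eq_zero fun i _ => by
    by_cases hu : u i = 0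
    · simp [hu]
    · simp [Function.notMem_support.1 (Set.disjoint_left.1 huv hu)]

lemma sum_abs_le_sqrt_card_mul_sqrt_sum_sq {ι : Type*} (T : Finset ι) (g : ι → ℝ) :
    ∑ i ∈ T, |g i| ≤ √T.card * √(∑ i ∈ T, g i ^ 2) := by
  simpa using Real.sum_mul_le_sqrt_mul_sqrt T (fun _ => 1) (fun i => |g i|)

lemma add_le_sqrt_two_mul_sqrt {a b : ℝ} (ha : 0 ≤ a) (hb : 0 ≤ b) :
    a + b ≤ √2 * √(a ^ 2 + b ^ 2) := by
  rw [← Real.sqrt_mul zero_le_two, Real.le_sqrt (by positivity) (by positivity)]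
  nlinarith [sq_nonneg (a - b)]

lemma Finset.exists_subset_card_eq_forall_sdiff_le {ι α : Type*} [DecidableEq ι] [LinearOrder α]
    (f : ι → α) {U : Finset ι} {k : ℕ} (hk : k ≤ U.card) :
    ∃ B ⊆ U, B.card = k ∧ ∀ b ∈ B, ∀ i ∈ U \ B, f i ≤ f b := by
  induction k with
  | zero => exact ⟨∅, Finset.empty_subset U, rfl, by simp⟩
  | succ k ih =>
    obtain ⟨B, hBU, hBk, hB⟩ := ih (Nat.le_of_succ_le hk)
    have hne : (U \ B).Nonempty := by
      rw [← Finset.card_pos, Finset.card_sdiff_of_subset hBU]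
      omega
    obtain ⟨i₀, hi₀, hmax⟩ := (U \ B).exists_max_image f hne
    have hi₀B : i₀ ∉ B := (Finset.mem_sdiff.1 hi₀).2
    refine ⟨insert i₀ B, Finset.insert_subset (Finset.mem_sdiff.1 hi₀).1 hBU,
      by rw [Finset.card_insert_of_notMem hi₀B, hBk], ?_⟩
    intro b hb i hi
    rw [Finset.sdiff_insert, Finset.mem_erase] at hi
    rcases Finset.mem_insert.1 hb with rfl | hb
    · exact hmax i hi.2
    · exact hB b hb i hi.2

lemma sqrt_sum_sq_le_sum_abs_div_sqrt {ι : Type*} (g : ι → ℝ) {s : ℕ} {B C : Finset ι}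
    (hB : B.card = s) (hC : C.card ≤ s) (hCB : ∀ c ∈ C, ∀ b ∈ B, |g c| ≤ |g b|) :
    √(∑ i ∈ C, g i ^ 2) ≤ (∑ i ∈ B, |g i|) / √s := by
  rcases C.eq_empty_or_nonempty with rfl | ⟨c₀, hc₀⟩
  · simp only [Finset.sum_empty, Real.sqrt_zero]
    positivity
  have hs : (0 : ℝ) < s := by exact_mod_cast (Finset.card_pos.2 ⟨c₀, hc₀⟩).trans_le hC
  set M := (∑ i ∈ B, |g i|) / s
  have hM : ∀ c ∈ C, |g c| ≤ M := fun c hc => by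
    rw [le_div_iff₀ hs, ← hB, mul_comm, ← nsmul_eq_mul, ← Finset.sum_const]
    exact Finset.sum_le_sum fun b hb => hCB c hc b hb
  rw [Real.sqrt_le_iff]
  refine ⟨by positivity, ?_⟩
  calc ∑ i ∈ C, g i ^ 2 ≤ ∑ _i ∈ C, M ^ 2 := Finset.sum_le_sum fun c hc => by
        rw [← sq_abs]
        exact pow_le_pow_left₀ (abs_nonneg _) (hM c hc) 2
    _ = C.card * M ^ 2 := by rw [Finset.sum_const, nsmul_eq_mul]
    _ ≤ s * M ^ 2 := by gcongr
    _ = ((∑ i ∈ B, |g i|) / √s) ^ 2 := by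
        rw [div_pow, div_pow, Real.sq_sqrt hs.le]
        field_simp

lemma disjoint_support_indicator {ι M : Type*} [Zero M] {S S' : Finset ι} (hSS' : Disjoint S S')
    (f g : ι → M) :
    Disjoint (Function.support ((S : Set ι).indicator f))
      (Function.support ((S' : Set ι).indicator g)) :=
  (Finset.disjoint_coe.2 hSS').mono Set.support_indicator_subset Set.support_indicator_subset

lemma indicator_add_indicator_add_indicator_compl_sdiff {ι M : Type*} [DecidableEq ι] [Fintype ι]
    [AddCommMonoid M] (f : ι → M) {T₀ T₁ : Finset ι} (hT₁ : T₁ ⊆ T₀ᶜ) :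
    (T₀ : Set ι).indicator f + (T₁ : Set ι).indicator f + (↑(T₀ᶜ \ T₁) : Set ι).indicator f =
      f := by
  ext i
  by_cases h₀ : i ∈ T₀
  · have h₁ : i ∉ T₁ := fun h₁ => Finset.mem_compl.1 (hT₁ h₁) h₀
    simp [h₀, h₁]
  · by_cases h₁ : i ∈ T₁ <;> simp [h₀, h₁]

-- `T` collects the `s` largest entries of `|g|` on `U`; the blocks of `L` are the next groups of
-- `s` largest entries, and each block's ℓ² norm is at most the previous block's ℓ¹ norm over `√s`.
lemma exists_tail_blocks {ι : Type*} [DecidableEq ι] (g : ι → ℝ) {s : ℕ} (hs : 0 < s)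
    (U : Finset ι) :
    ∃ T ⊆ U, T.card ≤ s ∧ ∃ L : List (Finset ι), (∀ B ∈ L, B ⊆ U \ T ∧ B.card ≤ s) ∧
      (↑(U \ T) : Set ι).indicator g = (L.map fun B : Finset ι => Set.indicator (↑B) g).sum ∧
      (L.map fun B => √(∑ i ∈ B, g i ^ 2)).sum ≤ (∑ i ∈ U, |g i|) / √s := by
  induction U using Finset.strongInduction with
  | H U ih =>
  by_cases hU : U.card ≤ s
  · refine ⟨U, subset_rfl, hU, [], by simp, by ext; simp, ?_⟩
    simp only [List.map_nil, List.sum_nil]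
    positivity
  obtain ⟨B, hBU, hBs, hB⟩ :=
    Finset.exists_subset_card_eq_forall_sdiff_le (fun i => |g i|) (le_of_not_ge hU)
  have hBne : B.Nonempty := Finset.card_pos.1 (hBs ▸ hs)
  obtain ⟨T, hTU, hTs, L, hL, hind, hsum⟩ :=
    ih (U \ B) (Finset.sdiff_ssubset hBU hBne)
  refine ⟨B, hBU, hBs.le, T :: L, ?_, ?_, ?_⟩
  · intro C hC
    rcases List.mem_cons.1 hC with rfl | hC
    · exact ⟨hTU, hTs⟩
    · exact ⟨(hL C hC).1.trans Finset.sdiff_subset, (hL C hC).2⟩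
  · rw [List.map_cons, List.sum_cons, ← hind]
    conv_lhs => rw [← Finset.union_sdiff_of_subset hTU, Finset.coe_union,
      Set.indicator_union_of_disjoint (Finset.disjoint_coe.2 Finset.disjoint_sdiff)]
    rfl
  · have hhead : √(∑ i ∈ T, g i ^ 2) ≤ (∑ i ∈ B, |g i|) / √s :=
      sqrt_sum_sq_le_sum_abs_div_sqrt g hBs hTs fun c hc b hb => hB b hb c (hTU hc)
    rw [List.map_cons, List.sum_cons, ← Finset.sum_sdiff hBU, add_div, add_comm]
    exact add_le_add hsum hhead

-- `ripConst k A` is the infimum of the `δ ≥ 0` with `HasRIP k δ A`.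
def HasRIP {n m : ℕ} (k : ℕ) (δ : ℝ) (A : Matrix (Fin n) (Fin m) ℝ) : Prop :=
  ∀ x : Fin m → ℝ, Sparse k x →
    (1 - δ) * l2norm x ^ 2 ≤ l2norm (A *ᵥ x) ^ 2 ∧ l2norm (A *ᵥ x) ^ 2 ≤ (1 + δ) * l2norm x ^ 2

-- Makes the infimum in `ripConst` range over a nonempty set (`sInf ∅ = 0`).
lemma hasRIP_of_frobenius_le {n m : ℕ} (k : ℕ) (A : Matrix (Fin n) (Fin m) ℝ) {δ : ℝ}
    (hδ : 1 + ∑ r, ∑ i, A r i ^ 2 ≤ δ) : HasRIP k δ A := by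
  intro x _
  have hA : 0 ≤ ∑ r, ∑ i, A r i ^ 2 := by positivity
  have hrow : ∀ r, (A *ᵥ x) r ^ 2 ≤ (∑ i, A r i ^ 2) * l2norm x ^ 2 := fun r => by
    rw [l2norm, Real.sq_sqrt (by positivity)]
    exact Finset.sum_mul_sq_le_sq_mul_sq Finset.univ (A r) x
  have hAx : l2norm (A *ᵥ x) ^ 2 ≤ (∑ r, ∑ i, A r i ^ 2) * l2norm x ^ 2 := by
    rw [l2norm, Real.sq_sqrt (by positivity), Finset.sum_mul]
    exact Finset.sum_le_sum fun r _ => hrow r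
  constructor <;> nlinarith [sq_nonneg (l2norm x), sq_nonneg (l2norm (A *ᵥ x))]

lemma exists_hasRIP_of_ripConst_lt {n m : ℕ} {k : ℕ} {A : Matrix (Fin n) (Fin m) ℝ} {c : ℝ}
    (h : ripConst k A < c) : ∃ δ, 0 ≤ δ ∧ δ < c ∧ HasRIP k δ A := by
  have hne : {δ : ℝ | 0 ≤ δ ∧ HasRIP k δ A}.Nonempty :=
    ⟨1 + ∑ r, ∑ i, A r i ^ 2, by positivity, hasRIP_of_frobenius_le k A le_rfl⟩
  obtain ⟨δ, ⟨hδ0, hδ⟩, hδc⟩ := exists_lt_of_csInf_lt hne h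
  exact ⟨δ, hδ0, hδc, hδ⟩

section RestrictedOrthogonality

variable {n m s t : ℕ} {δ : ℝ} {A : Matrix (Fin n) (Fin m) ℝ} {u v : Fin m → ℝ}

lemma two_mul_dotProduct_mulVec_le (hRIP : HasRIP (s + t) δ A) (hu : Sparse s u)
    (hv : Sparse t v) (huv : Disjoint (Function.support u) (Function.support v)) (a b : ℝ) :
    2 * a * b * ((A *ᵥ u) ⬝ᵥ (A *ᵥ v)) ≤ δ * (a ^ 2 * l2norm u ^ 2 + b ^ 2 * l2norm v ^ 2) := by
  have expand : ∀ c : ℝ, l2norm (a • u + c • v) ^ 2 = a ^ 2 * l2norm u ^ 2 + c ^ 2 * l2norm v ^ 2 ∧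
      l2norm (A *ᵥ (a • u + c • v)) ^ 2 = a ^ 2 * l2norm (A *ᵥ u) ^ 2
        + 2 * a * c * ((A *ᵥ u) ⬝ᵥ (A *ᵥ v)) + c ^ 2 * l2norm (A *ᵥ v) ^ 2 := fun c => by
    simp only [l2norm_sq, mulVec_add, mulVec_smul, add_dotProduct, dotProduct_add,
      smul_dotProduct, dotProduct_smul, dotProduct_comm v u, dotProduct_comm (A *ᵥ v),
      dotProduct_eq_zero_of_disjoint huv, smul_eq_mul]
    constructor <;> ring
  have hplus := (hRIP _ ((hu.smul a).add (hv.smul b))).2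
  have hminus := (hRIP _ ((hu.smul a).add (hv.smul (-b)))).1
  rw [(expand b).1, (expand b).2] at hplus
  rw [(expand (-b)).1, (expand (-b)).2] at hminus
  nlinarith

lemma abs_dotProduct_mulVec_le (hRIP : HasRIP (s + t) δ A) (hu : Sparse s u)
    (hv : Sparse t v) (huv : Disjoint (Function.support u) (Function.support v)) :
    |(A *ᵥ u) ⬝ᵥ (A *ᵥ v)| ≤ δ * l2norm u * l2norm v := by
  rcases (mul_nonneg (l2norm_nonneg u) (l2norm_nonneg v)).eq_or_lt with h0 | hpos
  · rcases mul_eq_zero.1 h0.symm with h | h <;> rw [h] <;> simp [l2norm_eq_zero.1 h]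
  have hle := two_mul_dotProduct_mulVec_le hRIP hu hv huv (l2norm v) (l2norm u)
  have hge := two_mul_dotProduct_mulVec_le hRIP hu hv huv (l2norm v) (-l2norm u)
  rw [abs_le]
  constructor <;> nlinarith

lemma abs_dotProduct_mulVec_sum_le (hRIP : HasRIP (s + t) δ A) (hu : Sparse s u)
    (L : List (Fin m → ℝ))
    (hL : ∀ v ∈ L, Sparse t v ∧ Disjoint (Function.support u) (Function.support v)) :
    |(A *ᵥ u) ⬝ᵥ (A *ᵥ L.sum)| ≤ δ * l2norm u * (L.map l2norm).sum := by
  induction L with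
  | nil => simp
  | cons v L ih =>
    obtain ⟨hv, huv⟩ := hL v List.mem_cons_self
    rw [List.sum_cons, mulVec_add, dotProduct_add, List.map_cons, List.sum_cons, mul_add]
    exact (abs_add_le _ _).trans (add_le_add (abs_dotProduct_mulVec_le hRIP hu hv huv)
      (ih fun w hw => hL w (List.mem_cons_of_mem v hw)))

end RestrictedOrthogonality

-- In the application `u₀ + u₁ = h_{T₀ ∪ T₁}` for a null vector `h`, and `L` lists its tail blocks.
lemma eq_zero_of_mulVec_add_eq_neg_mulVec_sum {n m s : ℕ} {δ : ℝ}
    {A : Matrix (Fin n) (Fin m) ℝ} (hδ0 : 0 ≤ δ) (hδ : δ < √2 - 1)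
    (hRIP : HasRIP (2 * s) δ A) {u₀ u₁ : Fin m → ℝ} (hu₀ : Sparse s u₀) (hu₁ : Sparse s u₁)
    (hu₀₁ : Disjoint (Function.support u₀) (Function.support u₁)) (L : List (Fin m → ℝ))
    (hL : ∀ v ∈ L, Sparse s v ∧ Disjoint (Function.support u₀) (Function.support v) ∧
      Disjoint (Function.support u₁) (Function.support v))
    (hA : A *ᵥ (u₀ + u₁) = -(A *ᵥ L.sum)) (hL₀ : (L.map l2norm).sum ≤ l2norm u₀) :
    u₀ = 0 := by
  rw [two_mul] at hRIP
  have hpyth : l2norm (u₀ + u₁) = √(l2norm u₀ ^ 2 + l2norm u₁ ^ 2) := by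
    rw [← Real.sqrt_sq (l2norm_nonneg (u₀ + u₁))]
    simp only [l2norm_sq, add_dotProduct, dotProduct_add,
      dotProduct_eq_zero_of_disjoint hu₀₁, dotProduct_eq_zero_of_disjoint hu₀₁.symm]
    ring_nf
  set a := l2norm u₀
  set b := l2norm u₁
  set N := l2norm (u₀ + u₁)
  set p₀ := (A *ᵥ u₀) ⬝ᵥ (A *ᵥ L.sum)
  set p₁ := (A *ᵥ u₁) ⬝ᵥ (A *ᵥ L.sum)
  have ha : 0 ≤ a := l2norm_nonneg _
  have haN : a ≤ N := hpyth ▸ Real.le_sqrt_of_sq_le (by nlinarith [sq_nonneg b])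
  have habN : a + b ≤ √2 * N := hpyth ▸ add_le_sqrt_two_mul_sqrt ha (l2norm_nonneg _)
  have hcross : l2norm (A *ᵥ (u₀ + u₁)) ^ 2 = -(p₀ + p₁) := by
    rw [l2norm_sq]
    nth_rewrite 2 [hA]
    rw [dotProduct_neg, mulVec_add, add_dotProduct]
  have hp₀ := abs_dotProduct_mulVec_sum_le hRIP hu₀ L fun v hv => ⟨(hL v hv).1, (hL v hv).2.1⟩
  have hp₁ := abs_dotProduct_mulVec_sum_le hRIP hu₁ L fun v hv => ⟨(hL v hv).1, (hL v hv).2.2⟩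
  have hsum_nonneg : 0 ≤ (L.map l2norm).sum := List.sum_nonneg (by simp [l2norm_nonneg])
  have key : (1 - δ) * N ^ 2 ≤ √2 * δ * N ^ 2 :=
    calc (1 - δ) * N ^ 2 ≤ l2norm (A *ᵥ (u₀ + u₁)) ^ 2 := (hRIP _ (hu₀.add hu₁)).1
      _ = -(p₀ + p₁) := hcross
      _ ≤ δ * a * (L.map l2norm).sum + δ * b * (L.map l2norm).sum := by
          linarith [neg_abs_le p₀, neg_abs_le p₁]
      _ = δ * (a + b) * (L.map l2norm).sum := by ring
      _ ≤ δ * (√2 * N) * N := by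
          gcongr
          · exact mul_nonneg hδ0 (mul_nonneg (Real.sqrt_nonneg 2) (l2norm_nonneg _))
          · exact hL₀.trans haN
      _ = √2 * δ * N ^ 2 := by ring
  have hgap : 0 < 1 - δ - √2 * δ := by
    nlinarith [Real.mul_self_sqrt zero_le_two, Real.sqrt_nonneg 2]
  have hN0 : N = 0 := pow_eq_zero_iff two_ne_zero |>.1 <|
    le_antisymm (by nlinarith [sq_nonneg N]) (sq_nonneg N)
  exact l2norm_eq_zero.1 (le_antisymm (haN.trans hN0.le) ha)

def NullSpaceProperty {n m : ℕ} (s : ℕ) (A : Matrix (Fin n) (Fin m) ℝ) : Prop :=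
  ∀ h : Fin m → ℝ, A *ᵥ h = 0 → h ≠ 0 →
    ∀ T : Finset (Fin m), T.card ≤ s → ∑ i ∈ T, |h i| < ∑ i ∈ Tᶜ, |h i|

lemma eq_zero_of_sum_compl_abs_le {m : ℕ} {h : Fin m → ℝ} {T : Finset (Fin m)}
    (hcone : ∑ i ∈ Tᶜ, |h i| ≤ ∑ i ∈ T, |h i|) (hT : ∀ i ∈ T, h i = 0) : h = 0 := by
  have hcompl : ∑ i ∈ Tᶜ, |h i| = 0 :=
    le_antisymm (hcone.trans_eq (Finset.sum_eq_zero fun i hi => by simp [hT i hi]))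
      (Finset.sum_nonneg fun i _ => abs_nonneg _)
  funext i
  by_cases hi : i ∈ T
  · exact hT i hi
  · exact abs_eq_zero.1 <| (Finset.sum_eq_zero_iff_of_nonneg fun i _ => abs_nonneg (h i)).1
      hcompl i (Finset.mem_compl.2 hi)

theorem nullSpaceProperty_of_hasRIP {n m s : ℕ} {δ : ℝ} {A : Matrix (Fin n) (Fin m) ℝ}
    (hδ0 : 0 ≤ δ) (hδ : δ < √2 - 1) (hRIP : HasRIP (2 * s) δ A) : NullSpaceProperty s A := by
  intro h hAh hne T₀ hT₀
  by_contra! hcone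
  refine hne (eq_zero_of_sum_compl_abs_le hcone ?_)
  rcases Nat.eq_zero_or_pos s with rfl | hs
  · simp [Finset.card_eq_zero.1 (Nat.le_zero.1 hT₀)]
  obtain ⟨T₁, hT₁, hT₁s, L, hL, hind, htail⟩ := exists_tail_blocks h hs T₀ᶜ
  set u₀ := (T₀ : Set (Fin m)).indicator h
  set u₁ := (T₁ : Set (Fin m)).indicator h
  set vs := L.map fun B : Finset (Fin m) => Set.indicator (↑B) h
  have hA : A *ᵥ (u₀ + u₁) = -(A *ᵥ vs.sum) := by
    rw [eq_neg_iff_add_eq_zero, ← mulVec_add, ← hind,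
      indicator_add_indicator_add_indicator_compl_sdiff h hT₁, hAh]
  have hvs : ∀ v ∈ vs, Sparse s v ∧ Disjoint (Function.support u₀) (Function.support v) ∧
      Disjoint (Function.support u₁) (Function.support v) := by
    simp only [vs, List.mem_map]
    rintro v ⟨B, hB, rfl⟩
    obtain ⟨hBsub, hBs⟩ := hL B hB
    exact ⟨sparse_indicator B hBs h,
      disjoint_support_indicator (Finset.disjoint_of_subset_right
        (hBsub.trans Finset.sdiff_subset) disjoint_compl_right) h h,
      disjoint_support_indicator (Finset.disjoint_of_subset_right hBsub Finset.disjoint_sdiff) h h⟩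
  have htail' : (vs.map l2norm).sum ≤ l2norm u₀ :=
    calc (vs.map l2norm).sum = (L.map fun B => √(∑ i ∈ B, h i ^ 2)).sum := by
          simp only [vs, List.map_map, Function.comp_def, l2norm_indicator]
      _ ≤ (∑ i ∈ T₀ᶜ, |h i|) / √s := htail
      _ ≤ (∑ i ∈ T₀, |h i|) / √s := by gcongr
      _ ≤ l2norm u₀ := by
          rw [div_le_iff₀ (by positivity), l2norm_indicator, mul_comm]
          exact (sum_abs_le_sqrt_card_mul_sqrt_sum_sq T₀ h).trans (by gcongr)
  have hu₀ : u₀ = 0 := eq_zero_of_mulVec_add_eq_neg_mulVec_sum hδ0 hδ hRIP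
    (sparse_indicator T₀ hT₀ h) (sparse_indicator T₁ hT₁s h)
    (disjoint_support_indicator (Finset.disjoint_of_subset_right hT₁ disjoint_compl_right) h h)
    vs hvs hA htail'
  intro i hi
  simpa [u₀, hi] using congrFun hu₀ i

lemma l1norm_add_sum_compl_sub_le {m : ℕ} {x : Fin m → ℝ} {T : Finset (Fin m)}
    (hx : ∀ i ∉ T, x i = 0) (h : Fin m → ℝ) :
    l1norm x + (∑ i ∈ Tᶜ, |h i| - ∑ i ∈ T, |h i|) ≤ l1norm (x + h) := by
  have hT : ∑ i ∈ T, |x i| - ∑ i ∈ T, |h i| ≤ ∑ i ∈ T, |x i + h i| := by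
    rw [← Finset.sum_sub_distrib]
    exact Finset.sum_le_sum fun i _ => abs_sub_abs_le_abs_add _ _
  have hTc : ∀ i ∈ Tᶜ, |x i| = 0 ∧ |x i + h i| = |h i| := fun i hi => by
    simp [hx i (Finset.mem_compl.1 hi)]
  rw [l1norm, l1norm, ← Finset.sum_add_sum_compl T, ← Finset.sum_add_sum_compl T]
  simp only [Pi.add_apply]
  rw [Finset.sum_congr rfl fun i hi => (hTc i hi).1, Finset.sum_congr rfl fun i hi => (hTc i hi).2,
    Finset.sum_const_zero]
  linarith

theorem NullSpaceProperty.eq_of_l1norm_le {n m s : ℕ} {A : Matrix (Fin n) (Fin m) ℝ}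
    (hA : NullSpaceProperty s A) {x y : Fin m → ℝ} (hx : Sparse s x) (hy : A *ᵥ y = A *ᵥ x)
    (hle : l1norm y ≤ l1norm x) : y = x := by
  obtain ⟨T, hT, hxT⟩ := hx.exists_finset
  by_contra hne
  have hlt := hA (y - x) (by rw [mulVec_sub, hy, sub_self]) (sub_ne_zero.2 hne) T hT
  have hgrow := l1norm_add_sum_compl_sub_le hxT (y - x)
  rw [add_sub_cancel] at hgrow
  linarith

/-- Noiseless Candès recovery: if `δ_{2s}(A) < √2 − 1` and `x` is `s`-sparse with
`Ax = b`, then `x` is the unique minimizer of `min ‖x̃‖₁` subject to `Ax̃ = b`. -/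
theorem stmt16 {n m : ℕ} (A : Matrix (Fin n) (Fin m) ℝ) (s : ℕ)
    (hRIP : ripConst (2 * s) A < Real.sqrt 2 - 1)
    (x : Fin m → ℝ) (hx : Sparse s x) (b : Fin n → ℝ) (hb : A *ᵥ x = b) :
    ∀ y : Fin m → ℝ, A *ᵥ y = b →
      l1norm x ≤ l1norm y ∧ (l1norm y ≤ l1norm x → y = x) := by
  obtain ⟨δ, hδ0, hδ, hRIPδ⟩ := exists_hasRIP_of_ripConst_lt hRIP
  have hNSP := nullSpaceProperty_of_hasRIP hδ0 hδ hRIPδ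
  intro y hy
  have hrecover : l1norm y ≤ l1norm x → y = x :=
    hNSP.eq_of_l1norm_le hx (hy.trans hb.symm)
  refine ⟨?_, hrecover⟩
  rcases le_total (l1norm x) (l1norm y) with hxy | hyx
  · exact hxy
  · rw [hrecover hyx]
end
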